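/- arXiv:2506.12191 — 3 statements merged into one kernel-verified Lean document; each statement's English description precedes it below -/
import Mathlib

section
/- Let n ≥ 1, E = ℝ^{2n}, and let m₁, m₂ be order functions on E × E* ≅ ℝ^{4n}. If the integral ∫_E m₁(q(x,z)) m₂(q(z,y)) dz is finite for at least one pair (x,y) ∈ E × E, then it is finite for every (x,y) ∈ E × E, and the function m₃ on E × E* defined by m₃(q(x,y)) = ∫_E m₁(q(x,z)) m₂(q(z,y)) dz (well defined since q : E×E → E×E* is a bijection) is an order function on E × E*. -/
open MeasureTheory Complex
open scoped ENNReal RealInnerProductSpace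

noncomputable section

abbrev Vec (n : ℕ) := EuclideanSpace ℝ (Fin n)
abbrev Phs (n : ℕ) := Vec n × Vec n

def sqE {n : ℕ} (a : Phs n) : ℝ := ‖a.1‖ ^ 2 + ‖a.2‖ ^ 2
def sqEE {n : ℕ} (A : Phs n × Phs n) : ℝ := sqE A.1 + sqE A.2
def ipE {n : ℕ} (a b : Phs n) : ℝ := (inner ℝ a.1 b.1 : ℝ) + (inner ℝ a.2 b.2 : ℝ)

/-- order function on `E = ℝ^{2n}` (Euclidean brackets). -/
def IsOrderFunE {n : ℕ} (m : Phs n → ℝ) : Prop :=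
  Measurable m ∧ (∀ x, 0 < m x) ∧
    ∃ C : ℝ, 0 < C ∧ ∃ N : ℝ, 0 ≤ N ∧
      ∀ X Y : Phs n, m X ≤ C * (1 + sqE (X - Y)) ^ (N / 2) * m Y

def IsOrderFunEE {n : ℕ} (m : Phs n × Phs n → ℝ) : Prop :=
  Measurable m ∧ (∀ x, 0 < m x) ∧
    ∃ C : ℝ, 0 < C ∧ ∃ N : ℝ, 0 ≤ N ∧
      ∀ X Y : Phs n × Phs n, m X ≤ C * (1 + sqEE (X - Y)) ^ (N / 2) * m Y

def Jinv {n : ℕ} (p : Phs n) : Phs n := (-p.2, p.1)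
def Jmap {n : ℕ} (p : Phs n) : Phs n := (p.2, -p.1)

def qmap {n : ℕ} (x y : Phs n) : Phs n × Phs n := ((2⁻¹ : ℝ) • (x + y), Jinv (y - x))

/-- Gaussian wave packet on `E = ℝ^{2n}`, used in the `S̃(m)` norm for symbols. -/
def packE {n : ℕ} (TΞ : Phs n × Phs n) (Y : Phs n) : ℂ :=
  Complex.exp (-((sqE (Y - TΞ.1) : ℝ) : ℂ) - Complex.I * ((ipE Y TΞ.2 : ℝ) : ℂ))

/-- Gaussian STFT packet on `ℝ^n` (exponent `-|y-x|²/2 - i y·ξ`). -/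
def packV {n : ℕ} (xξ : Phs n) (y : Vec n) : ℂ :=
  Complex.exp (-((‖y - xξ.1‖ ^ 2 / 2 : ℝ) : ℂ) - Complex.I * ((inner ℝ y xξ.2 : ℝ) : ℂ))

/-- `S̃`-packet on `ℝ^n` (exponent `-|y-T|² - i y·Ξ`). -/
def packVS {n : ℕ} (TΞ : Phs n) (y : Vec n) : ℂ :=
  Complex.exp (-((‖y - TΞ.1‖ ^ 2 : ℝ) : ℂ) - Complex.I * ((inner ℝ y TΞ.2 : ℝ) : ℂ))

/-- the integral `Φ_{u,w}(x,θ) = ∫ e^{itθ} u(x - t/2) w(x + t/2) dt`. -/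
def weylKernel {n : ℕ} (u w : SchwartzMap (Vec n) ℂ) (xθ : Phs n) : ℂ :=
  ∫ t : Vec n, Complex.exp (Complex.I * ((inner ℝ t xθ.2 : ℝ) : ℂ)) *
    u (xθ.1 - (2⁻¹ : ℝ) • t) * w (xθ.1 + (2⁻¹ : ℝ) • t)

section Stmt2Aux

variable {n : ℕ}

lemma sqE_nonneg (a : Phs n) : 0 ≤ sqE a := by unfold sqE; positivity

lemma sqEE_nonneg (A : Phs n × Phs n) : 0 ≤ sqEE A :=
  add_nonneg (sqE_nonneg A.1) (sqE_nonneg A.2)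

lemma sqE_neg (a : Phs n) : sqE (-a) = sqE a := by simp [sqE]

lemma sqE_Jinv (a : Phs n) : sqE (Jinv a) = sqE a := by simp [sqE, Jinv]; ring

lemma sqE_half_smul (a : Phs n) : sqE ((2⁻¹:ℝ) • a) = 4⁻¹ * sqE a := by
  simp [sqE, norm_smul]; ring

lemma sqE_parallelogram (a b : Phs n) :
    sqE (a + b) + sqE (a - b) = 2 * (sqE a + sqE b) := by
  unfold sqE
  simp only [Prod.fst_add, Prod.snd_add, Prod.fst_sub, Prod.snd_sub, pow_two]
  have h1 := parallelogram_law_with_norm ℝ a.1 b.1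
  have h2 := parallelogram_law_with_norm ℝ a.2 b.2
  linarith

lemma Jinv_sub (p q : Phs n) : Jinv p - Jinv q = Jinv (p - q) := by
  simp only [Jinv, Prod.ext_iff, Prod.fst_sub, Prod.snd_sub]
  constructor <;> simp [neg_add_eq_sub]

lemma qmap_sub (x y x' y' : Phs n) :
    qmap x y - qmap x' y' =
      ((2⁻¹:ℝ) • ((x - x') + (y - y')), Jinv ((y - y') - (x - x'))) := by
  unfold qmap
  rw [Prod.mk_sub_mk]
  congr 1
  · rw [← smul_sub]; congr 1; abel
  · rw [Jinv_sub]; congr 1; abel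

lemma sqEE_qmap_sub (x y x' y' : Phs n) :
    sqEE (qmap x y - qmap x' y') =
      4⁻¹ * sqE ((x - x') + (y - y')) + sqE ((y - y') - (x - x')) := by
  rw [qmap_sub]
  show sqE _ + sqE _ = _
  rw [sqE_half_smul, sqE_Jinv]

lemma sqEE_qmap_left (x x' z : Phs n) :
    sqEE (qmap x z - qmap x' z) = 5/4 * sqE (x - x') := by
  rw [sqEE_qmap_sub]
  simp only [sub_self, add_zero, zero_sub, sqE_neg]
  ring

lemma sqEE_qmap_right (z y y' : Phs n) :
    sqEE (qmap z y - qmap z y') = 5/4 * sqE (y - y') := by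
  rw [sqEE_qmap_sub]
  simp only [sub_self, zero_add, sub_zero]
  ring

lemma sqE_sub_symm (a b : Phs n) : sqE (b - a) = sqE (a - b) := by
  rw [← sqE_neg (a - b), neg_sub]

lemma key_left (x y x' y' : Phs n) :
    1 + 5/4 * sqE (x - x') ≤ 5/2 * (1 + sqEE (qmap x y - qmap x' y')) := by
  rw [sqEE_qmap_sub]
  have hpar := sqE_parallelogram (x - x') (y - y')
  have hsym := sqE_sub_symm (x - x') (y - y')
  have h1 := sqE_nonneg ((x - x') + (y - y'))
  have h2 := sqE_nonneg ((x - x') - (y - y'))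
  have h3 := sqE_nonneg (x - x')
  have h4 := sqE_nonneg (y - y')
  linarith

lemma key_right (x y x' y' : Phs n) :
    1 + 5/4 * sqE (y - y') ≤ 5/2 * (1 + sqEE (qmap x y - qmap x' y')) := by
  rw [sqEE_qmap_sub]
  have hpar := sqE_parallelogram (x - x') (y - y')
  have hsym := sqE_sub_symm (x - x') (y - y')
  have h1 := sqE_nonneg ((x - x') + (y - y'))
  have h2 := sqE_nonneg ((x - x') - (y - y'))
  have h3 := sqE_nonneg (x - x')
  have h4 := sqE_nonneg (y - y')
  linarith

lemma qmap_inv (W : Phs n × Phs n) :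
    qmap (W.1 - (2⁻¹:ℝ) • Jmap W.2) (W.1 + (2⁻¹:ℝ) • Jmap W.2) = W := by
  have h1 : (2⁻¹:ℝ) • ((W.1 - (2⁻¹:ℝ) • Jmap W.2) + (W.1 + (2⁻¹:ℝ) • Jmap W.2)) = W.1 := by
    module
  have h2 : (W.1 + (2⁻¹:ℝ) • Jmap W.2) - (W.1 - (2⁻¹:ℝ) • Jmap W.2) = Jmap W.2 := by
    module
  unfold qmap
  rw [h1, h2]
  have h3 : Jinv (Jmap W.2) = W.2 := by simp [Jinv, Jmap]
  rw [h3]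

end Stmt2Aux

/-- If `∫_E m₁(q(x,z)) m₂(q(z,y)) dz` is finite for one pair `(x,y)`,
then it is finite for all pairs, and the function `m₃` on `E × E*` determined by
`m₃(q(x,y)) = ∫_E m₁(q(x,z)) m₂(q(z,y)) dz` (well defined as `q` is bijective) is an
order function on `E × E*`. -/
theorem stmt_2 (n : ℕ) (hn : 1 ≤ n)
    (m₁ m₂ : Phs n × Phs n → ℝ)
    (h₁ : IsOrderFunEE m₁) (h₂ : IsOrderFunEE m₂)
    (x₀ y₀ : Phs n)
    (hfin : Integrable (fun z : Phs n => m₁ (qmap x₀ z) * m₂ (qmap z y₀)) volume) :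
    (∀ x y : Phs n,
      Integrable (fun z : Phs n => m₁ (qmap x z) * m₂ (qmap z y)) volume) ∧
    ∀ m₃ : Phs n × Phs n → ℝ,
      (∀ x y : Phs n, m₃ (qmap x y) = ∫ z : Phs n, m₁ (qmap x z) * m₂ (qmap z y)) →
      IsOrderFunEE m₃ := by
  obtain ⟨meas₁, pos₁, C₁, hC₁, N₁, hN₁, hb₁⟩ := h₁
  obtain ⟨meas₂, pos₂, C₂, hC₂, N₂, hN₂, hb₂⟩ := h₂
  have hq1 : ∀ x : Phs n, Measurable fun z => qmap x z := by
    intro x; unfold qmap Jinv; fun_prop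
  have hq2 : ∀ y : Phs n, Measurable fun z => qmap z y := by
    intro y; unfold qmap Jinv; fun_prop
  have hmeasf : ∀ x y : Phs n,
      AEStronglyMeasurable (fun z => m₁ (qmap x z) * m₂ (qmap z y)) volume :=
    fun x y => ((meas₁.comp (hq1 x)).mul (meas₂.comp (hq2 y))).aestronglyMeasurable
  have hpt : ∀ x y x' y' z : Phs n,
      m₁ (qmap x z) * m₂ (qmap z y) ≤
        (C₁ * (1 + 5/4 * sqE (x - x')) ^ (N₁/2)) *
          (C₂ * (1 + 5/4 * sqE (y - y')) ^ (N₂/2)) *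
          (m₁ (qmap x' z) * m₂ (qmap z y')) := by
    intro x y x' y' z
    have hbx : (0:ℝ) ≤ 1 + 5/4 * sqE (x - x') := by nlinarith [sqE_nonneg (x - x')]
    have hby : (0:ℝ) ≤ 1 + 5/4 * sqE (y - y') := by nlinarith [sqE_nonneg (y - y')]
    have e1 : m₁ (qmap x z) ≤ C₁ * (1 + 5/4 * sqE (x - x')) ^ (N₁/2) * m₁ (qmap x' z) := by
      have h := hb₁ (qmap x z) (qmap x' z)
      rwa [sqEE_qmap_left] at h
    have e2 : m₂ (qmap z y) ≤ C₂ * (1 + 5/4 * sqE (y - y')) ^ (N₂/2) * m₂ (qmap z y') := by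
      have h := hb₂ (qmap z y) (qmap z y')
      rwa [sqEE_qmap_right] at h
    have h2 : (0:ℝ) ≤ C₁ * (1 + 5/4 * sqE (x - x')) ^ (N₁/2) * m₁ (qmap x' z) :=
      mul_nonneg (mul_nonneg hC₁.le (Real.rpow_nonneg hbx _)) (pos₁ _).le
    calc m₁ (qmap x z) * m₂ (qmap z y)
        ≤ (C₁ * (1 + 5/4 * sqE (x - x')) ^ (N₁/2) * m₁ (qmap x' z)) *
            (C₂ * (1 + 5/4 * sqE (y - y')) ^ (N₂/2) * m₂ (qmap z y')) :=
          mul_le_mul e1 e2 (pos₂ _).le h2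
      _ = _ := by ring
  have hall : ∀ x y : Phs n,
      Integrable (fun z : Phs n => m₁ (qmap x z) * m₂ (qmap z y)) volume := by
    intro x y
    refine (hfin.const_mul ((C₁ * (1 + 5/4 * sqE (x - x₀)) ^ (N₁/2)) *
        (C₂ * (1 + 5/4 * sqE (y - y₀)) ^ (N₂/2)))).mono' (hmeasf x y) ?_
    filter_upwards with z
    rw [Real.norm_eq_abs, abs_of_pos (mul_pos (pos₁ _) (pos₂ _))]
    exact hpt x y x₀ y₀ z
  refine ⟨hall, ?_⟩
  intro m₃ hm₃
  have hrep : ∀ W : Phs n × Phs n, m₃ W =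
      ∫ z : Phs n, m₁ (qmap (W.1 - (2⁻¹:ℝ) • Jmap W.2) z) *
        m₂ (qmap z (W.1 + (2⁻¹:ℝ) • Jmap W.2)) := by
    intro W
    conv_lhs => rw [← qmap_inv W]
    exact hm₃ _ _
  refine ⟨?_, ?_, C₁ * C₂ * (5/2 : ℝ) ^ ((N₁ + N₂)/2),
    mul_pos (mul_pos hC₁ hC₂) (Real.rpow_pos_of_pos (by norm_num) _),
    N₁ + N₂, by linarith, ?_⟩
  · -- measurability of m₃
    have hG : Measurable fun p : (Phs n × Phs n) × Phs n =>
        m₁ (qmap p.1.1 p.2) * m₂ (qmap p.2 p.1.2) := by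
      refine (meas₁.comp ?_).mul (meas₂.comp ?_) <;> (unfold qmap Jinv; fun_prop)
    have hF : StronglyMeasurable fun W : Phs n × Phs n =>
        ∫ z : Phs n, m₁ (qmap W.1 z) * m₂ (qmap z W.2) :=
      hG.stronglyMeasurable.integral_prod_right'
    have hcont : Measurable fun W : Phs n × Phs n =>
        ((W.1 - (2⁻¹:ℝ) • Jmap W.2, W.1 + (2⁻¹:ℝ) • Jmap W.2) : Phs n × Phs n) := by
      unfold Jmap; fun_prop
    have heq : m₃ = (fun W : Phs n × Phs n =>
        ∫ z : Phs n, m₁ (qmap W.1 z) * m₂ (qmap z W.2)) ∘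
        (fun W => (W.1 - (2⁻¹:ℝ) • Jmap W.2, W.1 + (2⁻¹:ℝ) • Jmap W.2)) := by
      funext W; exact hrep W
    rw [heq]
    exact hF.measurable.comp hcont
  · -- positivity of m₃
    intro W
    rw [hrep W]
    set x := W.1 - (2⁻¹:ℝ) • Jmap W.2 with hx
    set y := W.1 + (2⁻¹:ℝ) • Jmap W.2 with hy
    have hpos : ∀ z : Phs n, 0 < m₁ (qmap x z) * m₂ (qmap z y) :=
      fun z => mul_pos (pos₁ _) (pos₂ _)
    refine (integral_pos_iff_support_of_nonneg (fun z => (hpos z).le) (hall x y)).mpr ?_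
    have hsupp : Function.support (fun z : Phs n => m₁ (qmap x z) * m₂ (qmap z y)) =
        Set.univ := Set.eq_univ_of_forall fun z => (hpos z).ne'
    rw [hsupp]
    exact isOpen_univ.measure_pos volume ⟨0, trivial⟩
  · -- the order-function estimate
    intro X Y
    obtain ⟨x, y, hXq⟩ : ∃ x y : Phs n, qmap x y = X := ⟨_, _, qmap_inv X⟩
    obtain ⟨x', y', hYq⟩ : ∃ x y : Phs n, qmap x y = Y := ⟨_, _, qmap_inv Y⟩
    rw [← hXq, ← hYq, hm₃ x y, hm₃ x' y']
    set D := sqEE (qmap x y - qmap x' y') with hD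
    have hD0 : 0 ≤ D := sqEE_nonneg _
    have hbase : (0:ℝ) < 5/2 * (1 + D) := by nlinarith
    have hptD : ∀ z : Phs n, m₁ (qmap x z) * m₂ (qmap z y) ≤
        (C₁ * C₂ * (5/2 : ℝ) ^ ((N₁ + N₂)/2) * (1 + D) ^ ((N₁ + N₂)/2)) *
          (m₁ (qmap x' z) * m₂ (qmap z y')) := by
      intro z
      have hbx : (0:ℝ) ≤ 1 + 5/4 * sqE (x - x') := by nlinarith [sqE_nonneg (x - x')]
      have hby : (0:ℝ) ≤ 1 + 5/4 * sqE (y - y') := by nlinarith [sqE_nonneg (y - y')]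
      have e1 : m₁ (qmap x z) ≤ C₁ * (5/2 * (1 + D)) ^ (N₁/2) * m₁ (qmap x' z) := by
        have h := hb₁ (qmap x z) (qmap x' z)
        rw [sqEE_qmap_left] at h
        refine h.trans ?_
        have hr : (1 + 5/4 * sqE (x - x')) ^ (N₁/2) ≤ (5/2 * (1 + D)) ^ (N₁/2) :=
          Real.rpow_le_rpow hbx (key_left x y x' y') (by linarith)
        exact mul_le_mul_of_nonneg_right
          (mul_le_mul_of_nonneg_left hr hC₁.le) (pos₁ (qmap x' z)).le
      have e2 : m₂ (qmap z y) ≤ C₂ * (5/2 * (1 + D)) ^ (N₂/2) * m₂ (qmap z y') := by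
        have h := hb₂ (qmap z y) (qmap z y')
        rw [sqEE_qmap_right] at h
        refine h.trans ?_
        have hr : (1 + 5/4 * sqE (y - y')) ^ (N₂/2) ≤ (5/2 * (1 + D)) ^ (N₂/2) :=
          Real.rpow_le_rpow hby (key_right x y x' y') (by linarith)
        exact mul_le_mul_of_nonneg_right
          (mul_le_mul_of_nonneg_left hr hC₂.le) (pos₂ (qmap z y')).le
      have h2 : (0:ℝ) ≤ C₁ * (5/2 * (1 + D)) ^ (N₁/2) * m₁ (qmap x' z) :=
        mul_nonneg (mul_nonneg hC₁.le (Real.rpow_nonneg hbase.le _)) (pos₁ _).le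
      have emul : ((5/2 : ℝ) * (1 + D)) ^ (N₁/2) * ((5/2 : ℝ) * (1 + D)) ^ (N₂/2) =
          (5/2 : ℝ) ^ ((N₁ + N₂)/2) * (1 + D) ^ ((N₁ + N₂)/2) := by
        rw [← Real.rpow_add hbase, ← add_div, Real.mul_rpow (by norm_num) (by linarith)]
      calc m₁ (qmap x z) * m₂ (qmap z y)
          ≤ (C₁ * (5/2 * (1 + D)) ^ (N₁/2) * m₁ (qmap x' z)) *
              (C₂ * (5/2 * (1 + D)) ^ (N₂/2) * m₂ (qmap z y')) :=
            mul_le_mul e1 e2 (pos₂ _).le h2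
        _ = (C₁ * C₂ * ((5/2 * (1 + D)) ^ (N₁/2) * (5/2 * (1 + D)) ^ (N₂/2))) *
              (m₁ (qmap x' z) * m₂ (qmap z y')) := by ring
        _ = _ := by rw [emul]; ring
    have hmono := integral_mono (hall x y)
      ((hall x' y').const_mul (C₁ * C₂ * (5/2 : ℝ) ^ ((N₁ + N₂)/2) * (1 + D) ^ ((N₁ + N₂)/2)))
      hptD
    rw [integral_const_mul] at hmono
    exact hmono.trans (le_of_eq (by ring))

end
end

section
/- Let d ≥ 1, let m be an order function on ℝ^d, and let C > 0. Then for every N ≥ 0 there exists a constant C_N > 0 such that for all x, z ∈ ℝ^d one has ∫∫_{ℝ^d × ℝ^d} m((y+t)/2) ⟨y−t⟩^{−N} e^{−|x−y|²/C} e^{−|z−t|²/C} dy dt ≤ C_N m((x+z)/2) ⟨x−z⟩^{−N}. -/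
open MeasureTheory

noncomputable section

lemma aux_rpow_neg {A B K s : ℝ} (hA : 0 < A) (hB : 0 < B) (hK : 0 < K)
    (h : B ≤ K * A) (hs : 0 ≤ s) : A ^ (-s) ≤ K ^ s * B ^ (-s) := by
  have hAs : (0:ℝ) < A ^ s := Real.rpow_pos_of_pos hA s
  have hBs : (0:ℝ) < B ^ s := Real.rpow_pos_of_pos hB s
  have h2 : B ^ s ≤ K ^ s * A ^ s := by
    rw [← Real.mul_rpow hK.le hA.le]
    exact Real.rpow_le_rpow hB.le h hs
  rw [Real.rpow_neg hA.le, Real.rpow_neg hB.le]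
  rw [← div_eq_mul_inv, le_div_iff₀ hBs]
  rw [inv_mul_le_iff₀ hAs]
  linarith [h2]

set_option maxHeartbeats 1000000 in
theorem stmt13_key (d : ℕ)
    (m : EuclideanSpace ℝ (Fin d) → ℝ) (hpos : ∀ x, 0 < m x)
    (C₀ : ℝ) (hC₀ : 0 < C₀) (N₀ : ℝ) (hN₀ : 0 ≤ N₀)
    (hordm : ∀ X Y : EuclideanSpace ℝ (Fin d),
        m X ≤ C₀ * (1 + ‖X - Y‖ ^ 2) ^ (N₀ / 2) * m Y)
    (C : ℝ) (hC : 0 < C) (N : ℝ) (hN : 0 ≤ N)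
    (x z y t : EuclideanSpace ℝ (Fin d)) :
    m ((2⁻¹ : ℝ) • (y + t)) * (1 + ‖y - t‖ ^ 2) ^ (-(N / 2)) *
        Real.exp (-‖x - y‖ ^ 2 / C) * Real.exp (-‖z - t‖ ^ 2 / C)
      ≤ (C₀ * (4:ℝ) ^ (N/2) * m ((2⁻¹ : ℝ) • (x + z)) * (1 + ‖x - z‖ ^ 2) ^ (-(N / 2))) *
        (((1 + ‖x - y‖ ^ 2) ^ ((N₀ + N) / 2) * Real.exp (-‖x - y‖ ^ 2 / C)) *
         ((1 + ‖z - t‖ ^ 2) ^ ((N₀ + N) / 2) * Real.exp (-‖z - t‖ ^ 2 / C))) := by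
  set a := ‖x - y‖ with ha
  set b := ‖z - t‖ with hb
  set P : ℝ := 1 + a ^ 2 with hP
  set Q : ℝ := 1 + b ^ 2 with hQ
  set A : ℝ := 1 + ‖y - t‖ ^ 2 with hA
  set B : ℝ := 1 + ‖x - z‖ ^ 2 with hB
  have ha0 : 0 ≤ a := norm_nonneg _
  have hb0 : 0 ≤ b := norm_nonneg _
  have hP0 : 0 < P := by positivity
  have hQ0 : 0 < Q := by positivity
  have hA0 : 0 < A := by positivity
  have hB0 : 0 < B := by positivity
  have hs : (0:ℝ) ≤ N / 2 := by positivity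
  -- order function bound
  have hm : m ((2⁻¹ : ℝ) • (y + t)) ≤ C₀ * (P * Q) ^ (N₀ / 2) * m ((2⁻¹ : ℝ) • (x + z)) := by
    refine le_trans (hordm ((2⁻¹ : ℝ) • (y + t)) ((2⁻¹ : ℝ) • (x + z))) ?_
    have hXY : (2⁻¹ : ℝ) • (y + t) - (2⁻¹ : ℝ) • (x + z) = (2⁻¹ : ℝ) • ((y + t) - (x + z)) :=
      (smul_sub _ _ _).symm
    have hsum : (y + t) - (x + z) = (y - x) + (t - z) := by abel
    have hn1 : ‖(2⁻¹ : ℝ) • (y + t) - (2⁻¹ : ℝ) • (x + z)‖ ≤ 2⁻¹ * (a + b) := by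
      rw [hXY, norm_smul, hsum]
      have : ‖(y - x) + (t - z)‖ ≤ a + b := by
        refine le_trans (norm_add_le _ _) ?_
        rw [norm_sub_rev y x, norm_sub_rev t z]
      simp only [Real.norm_eq_abs]
      rw [abs_of_pos (by norm_num : (0:ℝ) < 2⁻¹)]
      nlinarith [norm_nonneg ((y - x) + (t - z))]
    have hbase : 1 + ‖(2⁻¹ : ℝ) • (y + t) - (2⁻¹ : ℝ) • (x + z)‖ ^ 2 ≤ P * Q := by
      have hnn := norm_nonneg ((2⁻¹ : ℝ) • (y + t) - (2⁻¹ : ℝ) • (x + z))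
      rw [hP, hQ]
      nlinarith [hn1, sq_nonneg (a - b), sq_nonneg (a * b)]
    have := Real.rpow_le_rpow (by positivity) hbase (by positivity : (0:ℝ) ≤ N₀ / 2)
    have hmul := mul_le_mul_of_nonneg_right
      (mul_le_mul_of_nonneg_left this hC₀.le) (hpos ((2⁻¹ : ℝ) • (x + z))).le
    exact hmul
  -- bracket bound
  have hBK : B ≤ (4 * (P * Q)) * A := by
    have hxz : x - z = (x - y) + (y - t) + (t - z) := by abel
    have hc0 : (0:ℝ) ≤ ‖y - t‖ := norm_nonneg _
    have hn2 : ‖x - z‖ ≤ a + ‖y - t‖ + b := by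
      rw [hxz]
      refine le_trans (norm_add_le _ _) ?_
      have := norm_add_le (x - y) (y - t)
      rw [norm_sub_rev t z]
      linarith
    set c : ℝ := ‖y - t‖ with hcdef
    have h1 : ‖x - z‖ ^ 2 ≤ 3 * (a ^ 2 + c ^ 2 + b ^ 2) := by
      nlinarith [hn2, norm_nonneg (x - z), sq_nonneg (a - c), sq_nonneg (a - b),
        sq_nonneg (b - c)]
    have h2 : 1 + 3 * (a ^ 2 + c ^ 2 + b ^ 2) ≤ (4 * (P * Q)) * A := by
      rw [hA, hP, hQ]
      nlinarith [mul_nonneg (sq_nonneg a) (sq_nonneg b), mul_nonneg (sq_nonneg a) (sq_nonneg c),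
        mul_nonneg (sq_nonneg b) (sq_nonneg c),
        mul_nonneg (mul_nonneg (sq_nonneg a) (sq_nonneg b)) (sq_nonneg c)]
    rw [hB]
    linarith
  have hA' : A ^ (-(N / 2)) ≤ (4:ℝ) ^ (N/2) * (P ^ (N/2) * Q ^ (N/2)) * B ^ (-(N / 2)) := by
    have h := aux_rpow_neg hA0 hB0 (by positivity : (0:ℝ) < 4 * (P * Q)) hBK hs
    calc A ^ (-(N / 2)) ≤ (4 * (P * Q)) ^ (N/2) * B ^ (-(N / 2)) := h
      _ = (4:ℝ) ^ (N/2) * (P ^ (N/2) * Q ^ (N/2)) * B ^ (-(N / 2)) := by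
          rw [Real.mul_rpow (by norm_num) (by positivity), Real.mul_rpow hP0.le hQ0.le]
  -- combine
  have e1 : (0:ℝ) < Real.exp (-a ^ 2 / C) := Real.exp_pos _
  have e2 : (0:ℝ) < Real.exp (-b ^ 2 / C) := Real.exp_pos _
  have step : m ((2⁻¹ : ℝ) • (y + t)) * A ^ (-(N / 2)) *
        Real.exp (-a ^ 2 / C) * Real.exp (-b ^ 2 / C)
      ≤ (C₀ * (P * Q) ^ (N₀ / 2) * m ((2⁻¹ : ℝ) • (x + z))) *
        ((4:ℝ) ^ (N/2) * (P ^ (N/2) * Q ^ (N/2)) * B ^ (-(N / 2))) *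
        Real.exp (-a ^ 2 / C) * Real.exp (-b ^ 2 / C) := by
    have hm0 : 0 ≤ m ((2⁻¹ : ℝ) • (y + t)) := (hpos _).le
    have hAneg : (0:ℝ) ≤ A ^ (-(N / 2)) := (Real.rpow_pos_of_pos hA0 _).le
    have hfac : (0:ℝ) ≤ C₀ * (P * Q) ^ (N₀ / 2) * m ((2⁻¹ : ℝ) • (x + z)) := by
      have := (hpos ((2⁻¹ : ℝ) • (x + z))).le
      positivity
    refine mul_le_mul_of_nonneg_right (mul_le_mul_of_nonneg_right ?_ e1.le) e2.le
    exact mul_le_mul hm hA' hAneg hfac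
  refine le_trans step (le_of_eq ?_)
  have eP : P ^ (N₀ / 2) * P ^ (N / 2) = P ^ ((N₀ + N) / 2) := by
    rw [← Real.rpow_add hP0]; ring_nf
  have eQ : Q ^ (N₀ / 2) * Q ^ (N / 2) = Q ^ ((N₀ + N) / 2) := by
    rw [← Real.rpow_add hQ0]; ring_nf
  rw [Real.mul_rpow hP0.le hQ0.le, ← eP, ← eQ]
  ring

lemma aux_gauss_int (d : ℕ) (b : ℝ) (hb : 0 < b) :
    Integrable (fun v : EuclideanSpace ℝ (Fin d) => Real.exp (-b * ‖v‖ ^ 2)) volume := by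
  have h := (GaussianFourier.integrable_cexp_neg_mul_sq_norm_add
      (b := (b : ℂ)) (by simpa using hb) 0 (0 : EuclideanSpace ℝ (Fin d))).norm
  apply h.congr
  filter_upwards with v
  have hre : (-(b:ℂ) * (‖v‖:ℂ) ^ 2 + 0 * ((inner ℝ (0 : EuclideanSpace ℝ (Fin d)) v : ℝ) : ℂ))
      = ((-b * ‖v‖ ^ 2 : ℝ) : ℂ) := by push_cast; ring
  rw [Complex.norm_exp, hre, Complex.ofReal_re]

lemma aux_g_int (d : ℕ) (M C : ℝ) (hM : 0 ≤ M) (hC : 0 < C) :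
    Integrable (fun w : EuclideanSpace ℝ (Fin d) =>
      (1 + ‖w‖ ^ 2) ^ (M / 2) * Real.exp (-‖w‖ ^ 2 / C)) volume := by
  set ε : ℝ := (M * C + 1)⁻¹ with hε
  have hε0 : 0 < ε := by positivity
  have hε1 : ε ≤ 1 := by
    rw [hε]
    apply inv_le_one_of_one_le₀
    nlinarith
  have hεM : ε * M ≤ 1 / C := by
    have h1 : ε * M = M / (M * C + 1) := by rw [hε]; ring
    rw [h1, div_le_div_iff₀ (by positivity) hC]
    nlinarith
  apply Integrable.mono' ((aux_gauss_int d ((2*C)⁻¹) (by positivity)).const_mul (ε ^ (-(M/2))))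
  · apply Continuous.aestronglyMeasurable
    apply Continuous.mul
    · apply Continuous.rpow_const (by continuity)
      intro w; left; positivity
    · continuity
  · filter_upwards with w
    have hw : (0:ℝ) ≤ ‖w‖ ^ 2 := by positivity
    rw [Real.norm_of_nonneg (by positivity)]
    have h1 : (1 + ‖w‖ ^ 2) ^ (M / 2) ≤ ε ^ (-(M/2)) * Real.exp (ε * ‖w‖ ^ 2 * (M / 2)) := by
      have hb1 : 1 + ‖w‖ ^ 2 ≤ ε⁻¹ * (1 + ε * ‖w‖ ^ 2) := by
        rw [inv_mul_eq_div, le_div_iff₀ hε0]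
        nlinarith
      calc (1 + ‖w‖ ^ 2) ^ (M / 2)
          ≤ (ε⁻¹ * (1 + ε * ‖w‖ ^ 2)) ^ (M / 2) :=
            Real.rpow_le_rpow (by positivity) hb1 (by positivity)
        _ = ε⁻¹ ^ (M / 2) * (1 + ε * ‖w‖ ^ 2) ^ (M / 2) :=
            Real.mul_rpow (by positivity) (by positivity)
        _ ≤ ε ^ (-(M/2)) * Real.exp (ε * ‖w‖ ^ 2 * (M / 2)) := by
            have e1 : ε⁻¹ ^ (M / 2) = ε ^ (-(M / 2)) := by
              rw [Real.inv_rpow hε0.le, ← Real.rpow_neg hε0.le]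
            have e2 : (1 + ε * ‖w‖ ^ 2) ^ (M / 2) ≤ Real.exp (ε * ‖w‖ ^ 2 * (M / 2)) := by
              have hx := Real.add_one_le_exp (ε * ‖w‖ ^ 2)
              calc (1 + ε * ‖w‖ ^ 2) ^ (M / 2)
                  ≤ (Real.exp (ε * ‖w‖ ^ 2)) ^ (M / 2) :=
                    Real.rpow_le_rpow (by positivity) (by linarith) (by positivity)
                _ = Real.exp (ε * ‖w‖ ^ 2 * (M / 2)) := by rw [← Real.exp_mul]
            rw [e1]
            exact mul_le_mul_of_nonneg_left e2 (by positivity)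
    calc (1 + ‖w‖ ^ 2) ^ (M / 2) * Real.exp (-‖w‖ ^ 2 / C)
        ≤ (ε ^ (-(M/2)) * Real.exp (ε * ‖w‖ ^ 2 * (M / 2))) * Real.exp (-‖w‖ ^ 2 / C) :=
          mul_le_mul_of_nonneg_right h1 (Real.exp_nonneg _)
      _ = ε ^ (-(M/2)) * Real.exp (ε * ‖w‖ ^ 2 * (M / 2) + -‖w‖ ^ 2 / C) := by
          rw [Real.exp_add]; ring
      _ ≤ ε ^ (-(M/2)) * Real.exp (-(2*C)⁻¹ * ‖w‖ ^ 2) := by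
          apply mul_le_mul_of_nonneg_left _ (by positivity)
          apply Real.exp_le_exp.mpr
          have h4 : ε * M ≤ C⁻¹ := by rw [← one_div]; exact hεM
          have h5 : ε * M * (‖w‖ ^ 2 / 2) ≤ C⁻¹ * (‖w‖ ^ 2 / 2) :=
            mul_le_mul_of_nonneg_right h4 (by positivity)
          have h7 : ε * ‖w‖ ^ 2 * (M / 2) = ε * M * (‖w‖ ^ 2 / 2) := by ring
          have h8 : -‖w‖ ^ 2 / C + (2 * C)⁻¹ * ‖w‖ ^ 2 = -(C⁻¹ * (‖w‖ ^ 2 / 2)) := by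
            field_simp; ring
          linarith

set_option maxHeartbeats 1000000

/-- Double Gaussian smoothing of an order function against a bracket
weight: `∫∫ m((y+t)/2) ⟨y-t⟩^{-N} e^{-|x-y|²/C} e^{-|z-t|²/C} dy dt ≤ C_N m((x+z)/2) ⟨x-z⟩^{-N}`. -/
theorem stmt_13 (d : ℕ) (hd : 1 ≤ d)
    (m : EuclideanSpace ℝ (Fin d) → ℝ)
    (hmeas : Measurable m) (hpos : ∀ x, 0 < m x)
    (hord : ∃ C₀ : ℝ, 0 < C₀ ∧ ∃ N₀ : ℝ, 0 ≤ N₀ ∧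
      ∀ X Y : EuclideanSpace ℝ (Fin d),
        m X ≤ C₀ * (1 + ‖X - Y‖ ^ 2) ^ (N₀ / 2) * m Y)
    (C : ℝ) (hC : 0 < C) (N : ℝ) (hN : 0 ≤ N) :
    ∃ CN : ℝ, 0 < CN ∧
      ∀ x z : EuclideanSpace ℝ (Fin d),
        Integrable
          (fun p : EuclideanSpace ℝ (Fin d) × EuclideanSpace ℝ (Fin d) =>
            m ((2⁻¹ : ℝ) • (p.1 + p.2)) * (1 + ‖p.1 - p.2‖ ^ 2) ^ (-N / 2) *
              Real.exp (-‖x - p.1‖ ^ 2 / C) * Real.exp (-‖z - p.2‖ ^ 2 / C)) volume ∧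
        (∫ p : EuclideanSpace ℝ (Fin d) × EuclideanSpace ℝ (Fin d),
            m ((2⁻¹ : ℝ) • (p.1 + p.2)) * (1 + ‖p.1 - p.2‖ ^ 2) ^ (-N / 2) *
              Real.exp (-‖x - p.1‖ ^ 2 / C) * Real.exp (-‖z - p.2‖ ^ 2 / C))
          ≤ CN * m ((2⁻¹ : ℝ) • (x + z)) * (1 + ‖x - z‖ ^ 2) ^ (-N / 2) := by
  obtain ⟨C₀, hC₀, N₀, hN₀, hordm⟩ := hord
  have hM0 : (0:ℝ) ≤ N₀ + N := by linarith
  set g : EuclideanSpace ℝ (Fin d) → ℝ := fun w =>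
    (1 + ‖w‖ ^ 2) ^ ((N₀ + N) / 2) * Real.exp (-‖w‖ ^ 2 / C) with hgdef
  have hg_int : Integrable g volume := aux_g_int d (N₀ + N) C hM0 hC
  have hg_nonneg : ∀ w, 0 ≤ g w := fun w => by
    have h1 : (0:ℝ) < 1 + ‖w‖ ^ 2 := by positivity
    positivity
  set I : ℝ := ∫ w, g w with hIdef
  have hI0 : 0 ≤ I := integral_nonneg hg_nonneg
  refine ⟨C₀ * (4:ℝ) ^ (N/2) * (I * I) + 1, by positivity, fun x z => ?_⟩
  simp only [neg_div 2 N]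
  set mc : ℝ := m ((2⁻¹ : ℝ) • (x + z)) with hmc
  have hmc0 : 0 < mc := hpos _
  set Bx : ℝ := (1 + ‖x - z‖ ^ 2) ^ (-(N / 2)) with hBx
  have hBx0 : 0 < Bx := Real.rpow_pos_of_pos (by positivity) _
  set K : ℝ := C₀ * (4:ℝ) ^ (N/2) * mc * Bx with hK
  have hK0 : 0 < K := by positivity
  -- the dominating function
  have hgx : Integrable (fun y : EuclideanSpace ℝ (Fin d) => g (x - y)) volume :=
    hg_int.comp_sub_left x
  have hgz : Integrable (fun t : EuclideanSpace ℝ (Fin d) => g (z - t)) volume :=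
    hg_int.comp_sub_left z
  have hprod : Integrable (fun p : EuclideanSpace ℝ (Fin d) × EuclideanSpace ℝ (Fin d) =>
      g (x - p.1) * g (z - p.2)) volume := by
    rw [Measure.volume_eq_prod]
    exact hgx.mul_prod hgz
  have hbound : Integrable (fun p : EuclideanSpace ℝ (Fin d) × EuclideanSpace ℝ (Fin d) =>
      K * (g (x - p.1) * g (z - p.2))) volume := hprod.const_mul K
  -- pointwise bound
  have key : ∀ p : EuclideanSpace ℝ (Fin d) × EuclideanSpace ℝ (Fin d),
      m ((2⁻¹ : ℝ) • (p.1 + p.2)) * (1 + ‖p.1 - p.2‖ ^ 2) ^ (-(N / 2)) *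
        Real.exp (-‖x - p.1‖ ^ 2 / C) * Real.exp (-‖z - p.2‖ ^ 2 / C)
      ≤ K * (g (x - p.1) * g (z - p.2)) := fun p =>
    stmt13_key d m hpos C₀ hC₀ N₀ hN₀ hordm C hC N hN x z p.1 p.2
  -- measurability of the integrand
  have hFmeas : AEStronglyMeasurable
      (fun p : EuclideanSpace ℝ (Fin d) × EuclideanSpace ℝ (Fin d) =>
        m ((2⁻¹ : ℝ) • (p.1 + p.2)) * (1 + ‖p.1 - p.2‖ ^ 2) ^ (-(N / 2)) *
          Real.exp (-‖x - p.1‖ ^ 2 / C) * Real.exp (-‖z - p.2‖ ^ 2 / C)) volume := by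
    apply Measurable.aestronglyMeasurable
    have h1 : Measurable (fun p : EuclideanSpace ℝ (Fin d) × EuclideanSpace ℝ (Fin d) =>
        m ((2⁻¹ : ℝ) • (p.1 + p.2))) :=
      hmeas.comp ((continuous_fst.add continuous_snd).const_smul (2⁻¹ : ℝ)).measurable
    have h2 : Continuous (fun p : EuclideanSpace ℝ (Fin d) × EuclideanSpace ℝ (Fin d) =>
        (1 + ‖p.1 - p.2‖ ^ 2) ^ (-(N / 2))) := by
      apply Continuous.rpow_const
      · exact continuous_const.add (((continuous_fst.sub continuous_snd).norm).pow 2)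
      · intro p; left; positivity
    have h3 : Continuous (fun p : EuclideanSpace ℝ (Fin d) × EuclideanSpace ℝ (Fin d) =>
        Real.exp (-‖x - p.1‖ ^ 2 / C)) := by
      apply Real.continuous_exp.comp
      exact (((((continuous_const.sub continuous_fst).norm).pow 2).neg).div_const C)
    have h4 : Continuous (fun p : EuclideanSpace ℝ (Fin d) × EuclideanSpace ℝ (Fin d) =>
        Real.exp (-‖z - p.2‖ ^ 2 / C)) := by
      apply Real.continuous_exp.comp
      exact (((((continuous_const.sub continuous_snd).norm).pow 2).neg).div_const C)
    exact ((h1.mul h2.measurable).mul h3.measurable).mul h4.measurable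
  have hFnonneg : ∀ p : EuclideanSpace ℝ (Fin d) × EuclideanSpace ℝ (Fin d),
      0 ≤ m ((2⁻¹ : ℝ) • (p.1 + p.2)) * (1 + ‖p.1 - p.2‖ ^ 2) ^ (-(N / 2)) *
        Real.exp (-‖x - p.1‖ ^ 2 / C) * Real.exp (-‖z - p.2‖ ^ 2 / C) := fun p => by
    have h1 : 0 < m ((2⁻¹ : ℝ) • (p.1 + p.2)) := hpos _
    have h2 : (0:ℝ) < 1 + ‖p.1 - p.2‖ ^ 2 := by positivity
    positivity
  have hFint : Integrable
      (fun p : EuclideanSpace ℝ (Fin d) × EuclideanSpace ℝ (Fin d) =>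
        m ((2⁻¹ : ℝ) • (p.1 + p.2)) * (1 + ‖p.1 - p.2‖ ^ 2) ^ (-(N / 2)) *
          Real.exp (-‖x - p.1‖ ^ 2 / C) * Real.exp (-‖z - p.2‖ ^ 2 / C)) volume := by
    refine hbound.mono' hFmeas ?_
    filter_upwards with p
    rw [Real.norm_of_nonneg (hFnonneg p)]
    exact key p
  refine ⟨hFint, ?_⟩
  have hint_le : (∫ p : EuclideanSpace ℝ (Fin d) × EuclideanSpace ℝ (Fin d),
      m ((2⁻¹ : ℝ) • (p.1 + p.2)) * (1 + ‖p.1 - p.2‖ ^ 2) ^ (-(N / 2)) *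
        Real.exp (-‖x - p.1‖ ^ 2 / C) * Real.exp (-‖z - p.2‖ ^ 2 / C))
      ≤ ∫ p : EuclideanSpace ℝ (Fin d) × EuclideanSpace ℝ (Fin d),
        K * (g (x - p.1) * g (z - p.2)) :=
    integral_mono hFint hbound key
  have hval : (∫ p : EuclideanSpace ℝ (Fin d) × EuclideanSpace ℝ (Fin d),
      K * (g (x - p.1) * g (z - p.2))) = K * (I * I) := by
    rw [integral_const_mul]
    congr 1
    rw [Measure.volume_eq_prod, integral_prod_mul (fun y => g (x - y)) (fun t => g (z - t))]
    rw [integral_sub_left_eq_self g volume x, integral_sub_left_eq_self g volume z]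
  rw [hval] at hint_le
  refine le_trans hint_le ?_
  have hfin : K * (I * I) = (C₀ * (4:ℝ) ^ (N/2) * (I * I)) * mc * Bx := by
    rw [hK]; ring
  rw [hfin]
  have hmb : 0 ≤ mc * Bx := by positivity
  nlinarith [hmb]


end
end

section
/- Let N ≥ 1 and let F : ℂ^N → ℝ be a real quadratic form (a homogeneous degree-2 polynomial in the real coordinates of ℂ^N ≅ ℝ^{2N}) that is strictly plurisubharmonic, i.e., its Levi form (∂²F/∂z_j∂z̄_k)_{j,k} is positive definite. Let Λ ⊆ ℂ^N be an ℝ-linear subspace with dim_ℝ Λ = N and Λ ∩ iΛ = {0} (a maximally totally real subspace), and assume that F vanishes to second order along Λ, i.e., F(z) = 0 and dF(z) = 0 for every z ∈ Λ. Then there exists a constant C ≥ 1 such that (1/C) dist(z, Λ)² ≤ F(z) ≤ C dist(z, Λ)² for all z ∈ ℂ^N, where dist(z, Λ) is the Euclidean distance from z to Λ. -/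
open MeasureTheory

noncomputable section

section Aux

variable {E : Type*} [NormedAddCommGroup E] [NormedSpace ℝ E]

lemma aux_le_infDist {s : Set E} (hs : s.Nonempty) {x : E} {c : ℝ}
    (h : ∀ y ∈ s, c ≤ dist x y) : c ≤ Metric.infDist x s := by
  by_contra hc
  push_neg at hc
  obtain ⟨y, hy, hlt⟩ := (Metric.infDist_lt_iff hs).1 hc
  exact absurd (h y hy) (not_le.2 hlt)

/-- Translation invariance of the distance to a submodule. -/
lemma aux_infDist_add (Λ : Submodule ℝ E) {a : E} (ha : a ∈ Λ) (x : E) :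
    Metric.infDist (a + x) (Λ : Set E) = Metric.infDist x (Λ : Set E) := by
  have hne : (Λ : Set E).Nonempty := ⟨0, Λ.zero_mem⟩
  apply le_antisymm
  · apply aux_le_infDist hne
    intro y hy
    calc Metric.infDist (a + x) (Λ : Set E) ≤ dist (a + x) (a + y) :=
          Metric.infDist_le_dist_of_mem (Λ.add_mem ha hy)
      _ = dist x y := by rw [dist_add_left]
  · apply aux_le_infDist hne
    intro y hy
    calc Metric.infDist x (Λ : Set E) ≤ dist x (-a + y) :=
          Metric.infDist_le_dist_of_mem (Λ.add_mem (Λ.neg_mem ha) hy)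
      _ = dist (a + x) y := by
          rw [dist_eq_norm, dist_eq_norm]
          congr 1
          abel

lemma aux_infDist_smul_le (Λ : Submodule ℝ E) (c : ℝ) (x : E) :
    Metric.infDist (c • x) (Λ : Set E) ≤ |c| * Metric.infDist x (Λ : Set E) := by
  have hne : (Λ : Set E).Nonempty := ⟨0, Λ.zero_mem⟩
  rcases eq_or_ne c 0 with rfl | hc
  · simp [Metric.infDist_zero_of_mem (Λ.zero_mem), Metric.infDist_nonneg]
  · have h := aux_le_infDist hne (x := x) (c := |c|⁻¹ * Metric.infDist (c • x) (Λ : Set E)) ?_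
    · have hcpos : 0 < |c| := abs_pos.2 hc
      calc Metric.infDist (c • x) (Λ : Set E)
          = |c| * (|c|⁻¹ * Metric.infDist (c • x) (Λ : Set E)) := by
            field_simp
        _ ≤ |c| * Metric.infDist x (Λ : Set E) := by
            exact mul_le_mul_of_nonneg_left h hcpos.le
    · intro y hy
      have hmem : c • y ∈ Λ := Λ.smul_mem c hy
      have h1 : Metric.infDist (c • x) (Λ : Set E) ≤ dist (c • x) (c • y) :=
        Metric.infDist_le_dist_of_mem hmem
      have h2 : dist (c • x) (c • y) = |c| * dist x y := by
        rw [dist_eq_norm, dist_eq_norm, ← smul_sub, norm_smul, Real.norm_eq_abs]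
      rw [h2] at h1
      have hcpos : 0 < |c| := abs_pos.2 hc
      rw [inv_mul_le_iff₀ hcpos]
      linarith [h1]

lemma aux_infDist_smul (Λ : Submodule ℝ E) {c : ℝ} (hc : c ≠ 0) (x : E) :
    Metric.infDist (c • x) (Λ : Set E) = |c| * Metric.infDist x (Λ : Set E) := by
  apply le_antisymm (aux_infDist_smul_le Λ c x)
  have h := aux_infDist_smul_le Λ c⁻¹ (c • x)
  rw [inv_smul_smul₀ hc, abs_inv] at h
  have hcpos : 0 < |c| := abs_pos.2 hc
  have h2 := mul_le_mul_of_nonneg_left h hcpos.le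
  rw [← mul_assoc, mul_inv_cancel₀ (ne_of_gt hcpos), one_mul] at h2
  exact h2

/-- A quadratic form on a finite-dimensional real normed space is continuous. -/
lemma aux_quadratic_continuous [FiniteDimensional ℝ E] (Q : QuadraticForm ℝ E) :
    Continuous Q := by
  set B : LinearMap.BilinMap ℝ E ℝ := QuadraticMap.associated (R := ℝ) Q with hB
  have hQB : ∀ x, Q x = B x x := by
    intro x
    conv_lhs => rw [← QuadraticMap.toQuadraticMap_associated ℝ Q]
    rfl
  set L : E →ₗ[ℝ] (E →L[ℝ] ℝ) :=
    (LinearMap.toContinuousLinearMap : (E →ₗ[ℝ] ℝ) ≃ₗ[ℝ] (E →L[ℝ] ℝ)).toLinearMap ∘ₗ B with hL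
  have hLc : Continuous L := L.continuous_of_finiteDimensional
  have : Continuous fun x => (L x) x := by
    exact isBoundedBilinearMap_apply.continuous.comp (hLc.prodMk continuous_id)
  convert this using 1
  ext x
  rw [hQB x]
  rfl

end Aux

/-- If a strictly plurisubharmonic real quadratic form `F` on `ℂ^N`
(strict plurisubharmonicity of a quadratic form being equivalent to `F(w) + F(iw) > 0`
for `w ≠ 0`, as the Levi form is `w ↦ (F(w) + F(iw))/2`) vanishes to second order along
a maximally totally real subspace `Λ` (encoded by `F(z + w) = F(w)` for `z ∈ Λ`, which
for a quadratic form says exactly `F|_Λ = 0` and `dF|_Λ = 0`), then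
`F(z) ≍ dist(z, Λ)²`. -/
theorem stmt_18 (N : ℕ) (hN : 1 ≤ N)
    (F : QuadraticForm ℝ (EuclideanSpace ℂ (Fin N)))
    (hpsh : ∀ w : EuclideanSpace ℂ (Fin N), w ≠ 0 → 0 < F w + F (Complex.I • w))
    (Λ : Submodule ℝ (EuclideanSpace ℂ (Fin N)))
    (hdim : Module.finrank ℝ Λ = N)
    (htotreal : ∀ z ∈ Λ, Complex.I • z ∈ Λ → z = 0)
    (hvanish : ∀ z ∈ Λ, ∀ w : EuclideanSpace ℂ (Fin N), F (z + w) = F w) :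
    ∃ C : ℝ, 1 ≤ C ∧
      ∀ z : EuclideanSpace ℂ (Fin N),
        C⁻¹ * Metric.infDist z (Λ : Set (EuclideanSpace ℂ (Fin N))) ^ 2 ≤ F z ∧
        F z ≤ C * Metric.infDist z (Λ : Set (EuclideanSpace ℂ (Fin N))) ^ 2 := by
  classical
  set M := EuclideanSpace ℂ (Fin N)
  -- F vanishes on Λ
  have hF0 : ∀ z ∈ Λ, F z = 0 := by
    intro z hz
    have := hvanish z hz 0
    simpa using this
  -- the ℝ-linear map "multiplication by I"
  set J : M →ₗ[ℝ] M :=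
    { toFun := fun x => Complex.I • x
      map_add' := fun x y => smul_add _ _ _
      map_smul' := fun c x => smul_comm _ _ _ } with hJdef
  have hJ : ∀ x, J x = Complex.I • x := fun x => rfl
  have hJinj : Function.Injective J := by
    intro x y hxy
    have : Complex.I • x = Complex.I • y := hxy
    have := congrArg (fun v => (Complex.I)⁻¹ • v) this
    simpa [smul_smul, Complex.I_ne_zero] using this
  set Λ' : Submodule ℝ M := Λ.map J with hΛ'
  have hmemΛ' : ∀ v, v ∈ Λ' ↔ ∃ w ∈ Λ, Complex.I • w = v := by
    intro v; simp [hΛ', Submodule.mem_map, hJ]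
    exact Iff.rfl
  -- Λ ∩ Λ' = ⊥
  have hdisj : Disjoint Λ Λ' := by
    rw [Submodule.disjoint_def]
    intro v hv hv'
    obtain ⟨w, hw, hwv⟩ := (hmemΛ' v).1 hv'
    apply htotreal v hv
    have : Complex.I • v = -w := by
      rw [← hwv, smul_smul, Complex.I_mul_I, neg_one_smul]
    rw [this]
    exact Λ.neg_mem hw
  -- dimensions
  have hfinrankM : Module.finrank ℝ M = 2 * N := by
    have h1 : Module.finrank ℝ M = Module.finrank ℝ (Fin N → ℂ) :=
      (WithLp.linearEquiv 2 ℝ (Fin N → ℂ)).finrank_eq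
    rw [h1, Module.finrank_pi_fintype, Complex.finrank_real_complex]
    simp [Finset.sum_const, mul_comm]
  have hdim' : Module.finrank ℝ Λ' = N := by
    rw [hΛ', ← (Submodule.equivMapOfInjective J hJinj Λ).finrank_eq]
    exact hdim
  have hcodisj : Λ ⊔ Λ' = ⊤ := by
    apply Submodule.eq_top_of_finrank_eq
    have := Submodule.finrank_sup_add_finrank_inf_eq Λ Λ'
    rw [disjoint_iff.1 hdisj] at this
    simp only [finrank_bot, add_zero] at this
    rw [this, hdim, hdim', hfinrankM]
    ring
  -- decomposition of any z
  have hdecomp : ∀ z : M, ∃ a ∈ Λ, ∃ b ∈ Λ', z = a + b := by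
    intro z
    have hz : z ∈ Λ ⊔ Λ' := by rw [hcodisj]; trivial
    obtain ⟨a, ha, b, hb, hab⟩ := Submodule.mem_sup.1 hz
    exact ⟨a, ha, b, hb, hab.symm⟩
  -- positivity of F on Λ' \ {0}
  have hFpos : ∀ v ∈ Λ', v ≠ 0 → 0 < F v := by
    intro v hv hv0
    obtain ⟨w, hw, hwv⟩ := (hmemΛ' v).1 hv
    have hw0 : w ≠ 0 := by
      rintro rfl; exact hv0 (by rw [← hwv, smul_zero])
    have := hpsh w hw0
    rw [hF0 w hw, hwv] at this
    linarith
  -- Λ is closed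
  have hclosed : IsClosed (Λ : Set M) := Λ.closed_of_finiteDimensional
  have hΛne : (Λ : Set M).Nonempty := ⟨0, Λ.zero_mem⟩
  -- positivity of dist on Λ' \ {0}
  have hdpos : ∀ v ∈ Λ', v ≠ 0 → 0 < Metric.infDist v (Λ : Set M) := by
    intro v hv hv0
    rw [← hclosed.notMem_iff_infDist_pos hΛne]
    intro hvΛ
    exact hv0 (hdisj.le_bot ⟨hvΛ, hv⟩)
  -- the compact set
  set K : Set M := Metric.sphere 0 1 ∩ (Λ' : Set M) with hK
  have hKcompact : IsCompact K :=
    (isCompact_sphere (0 : M) 1).inter_right Λ'.closed_of_finiteDimensional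
  have hKne : K.Nonempty := by
    have hΛ'nebot : Λ' ≠ ⊥ := by
      intro h
      rw [h] at hdim'
      simp at hdim'
      omega
    obtain ⟨v, hv, hv0⟩ := Submodule.ne_bot_iff _ |>.1 hΛ'nebot
    have hvn : ‖v‖ ≠ 0 := norm_ne_zero_iff.2 hv0
    refine ⟨‖v‖⁻¹ • v, ?_, Λ'.smul_mem _ hv⟩
    simp [norm_smul, abs_of_nonneg (norm_nonneg v), inv_mul_cancel₀ hvn]
  -- F and g are continuous
  have hFcont : Continuous F := aux_quadratic_continuous F
  set g : M → ℝ := fun x => Metric.infDist x (Λ : Set M) with hg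
  have hgcont : Continuous g := Metric.continuous_infDist_pt _
  -- extrema on K
  obtain ⟨u1, hu1, hmin1⟩ := hKcompact.exists_isMinOn hKne hFcont.continuousOn
  obtain ⟨u2, hu2, hmax2⟩ := hKcompact.exists_isMaxOn hKne hFcont.continuousOn
  obtain ⟨u3, hu3, hmin3⟩ := hKcompact.exists_isMinOn hKne hgcont.continuousOn
  obtain ⟨u4, hu4, hmax4⟩ := hKcompact.exists_isMaxOn hKne hgcont.continuousOn
  set mF := F u1 with hmF
  set MF := F u2 with hMF
  set mg := g u3 with hmg
  set Mg := g u4 with hMg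
  have hKne0 : ∀ u ∈ K, u ≠ 0 := by
    intro u hu
    have : ‖u‖ = 1 := by simpa using hu.1
    intro h
    rw [h] at this
    simp at this
  have hmFpos : 0 < mF := hFpos u1 hu1.2 (hKne0 u1 hu1)
  have hmgpos : 0 < mg := hdpos u3 hu3.2 (hKne0 u3 hu3)
  have hMgpos : 0 < Mg := lt_of_lt_of_le hmgpos (hmin3 hu4)
  have hMFpos : 0 < MF := lt_of_lt_of_le hmFpos (hmin1 hu2)
  -- the constant
  refine ⟨max 1 (max (MF / mg ^ 2) (Mg ^ 2 / mF)), le_max_left _ _, ?_⟩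
  set C := max 1 (max (MF / mg ^ 2) (Mg ^ 2 / mF)) with hC
  have hC1 : (1 : ℝ) ≤ C := le_max_left _ _
  have hCpos : 0 < C := lt_of_lt_of_le one_pos hC1
  have hC2 : MF / mg ^ 2 ≤ C := le_trans (le_max_left _ _) (le_max_right _ _)
  have hC3 : Mg ^ 2 / mF ≤ C := le_trans (le_max_right _ _) (le_max_right _ _)
  intro z
  obtain ⟨a, ha, b, hb, rfl⟩ := hdecomp z
  have hFz : F (a + b) = F b := hvanish a ha b
  have hdz : Metric.infDist (a + b) (Λ : Set M) = Metric.infDist b (Λ : Set M) :=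
    aux_infDist_add Λ ha b
  rw [hFz, hdz]
  rcases eq_or_ne b 0 with rfl | hb0
  · rw [Metric.infDist_zero_of_mem Λ.zero_mem]
    simp
  · set t := ‖b‖ with ht
    have htpos : 0 < t := norm_pos_iff.2 hb0
    set u := t⁻¹ • b with hu
    have hbu : b = t • u := by
      rw [hu, smul_smul, mul_inv_cancel₀ (ne_of_gt htpos), one_smul]
    have huK : u ∈ K := by
      constructor
      · simp only [hu, mem_sphere_iff_norm, sub_zero, norm_smul, Real.norm_eq_abs,
          abs_of_pos (inv_pos.2 htpos)]
        rw [mem_sphere_zero_iff_norm, norm_smul, Real.norm_eq_abs, abs_of_pos (inv_pos.2 htpos), ← ht,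
          inv_mul_cancel₀ (ne_of_gt htpos)]
      · exact Λ'.smul_mem _ hb
    have hFb : F b = t ^ 2 * F u := by
      rw [hbu, QuadraticMap.map_smul, smul_eq_mul, sq]
    have hgb : Metric.infDist b (Λ : Set M) = t * g u := by
      rw [hbu, aux_infDist_smul Λ (ne_of_gt htpos) u, abs_of_pos htpos]
    have hFu1 : mF ≤ F u := hmin1 huK
    have hFu2 : F u ≤ MF := hmax2 huK
    have hgu1 : mg ≤ g u := hmin3 huK
    have hgu2 : g u ≤ Mg := hmax4 huK
    have hgupos : 0 < g u := lt_of_lt_of_le hmgpos hgu1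
    rw [hFb, hgb]
    constructor
    · -- C⁻¹ * (t * g u)^2 ≤ t^2 * F u
      have h1 : (t * g u) ^ 2 ≤ t ^ 2 * Mg ^ 2 := by
        rw [mul_pow]
        apply mul_le_mul_of_nonneg_left _ (sq_nonneg t)
        exact pow_le_pow_left₀ hgupos.le hgu2 2
      have h2 : Mg ^ 2 ≤ C * mF := by
        rw [div_le_iff₀ hmFpos] at hC3
        linarith
      calc C⁻¹ * (t * g u) ^ 2 ≤ C⁻¹ * (t ^ 2 * Mg ^ 2) := by
            apply mul_le_mul_of_nonneg_left h1 (inv_nonneg.2 hCpos.le)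
        _ ≤ C⁻¹ * (t ^ 2 * (C * mF)) := by
            exact mul_le_mul_of_nonneg_left
              (mul_le_mul_of_nonneg_left h2 (sq_nonneg t)) (inv_nonneg.2 hCpos.le)
        _ = t ^ 2 * mF := by
            field_simp
        _ ≤ t ^ 2 * F u := mul_le_mul_of_nonneg_left hFu1 (sq_nonneg t)
    · -- t^2 * F u ≤ C * (t * g u)^2
      have h1 : MF ≤ C * mg ^ 2 := by
        rw [div_le_iff₀ (by positivity : (0:ℝ) < mg ^ 2)] at hC2
        linarith
      have h2 : mg ^ 2 ≤ (g u) ^ 2 := pow_le_pow_left₀ hmgpos.le hgu1 2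
      calc t ^ 2 * F u ≤ t ^ 2 * MF := mul_le_mul_of_nonneg_left hFu2 (sq_nonneg t)
        _ ≤ t ^ 2 * (C * (g u) ^ 2) := by
            apply mul_le_mul_of_nonneg_left _ (sq_nonneg t)
            calc MF ≤ C * mg ^ 2 := h1
              _ ≤ C * (g u) ^ 2 := mul_le_mul_of_nonneg_left h2 hCpos.le
        _ = C * (t * g u) ^ 2 := by ring
end
end
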